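/- arXiv:2212.14626 — 3 statements merged into one kernel-verified Lean document; each statement's English description precedes it below -/
import Mathlib

section
/- Let k be a C_r field and let f_1,...,f_s ∈ k[x_0,...,x_n] be homogeneous polynomials all of the same degree d > 0. If n+1 > s·d^r, then f_1,...,f_s have a common nontrivial zero in k^{n+1}. -/
/-!
Suppose the `f_i` had no common nontrivial zero.

If `k` is algebraically closed, the Nullstellensatz makes the maximal ideal of the origin a
minimal prime over `(f_1, …, f_s)`; its height is `n + 1` (all points look alike after a
translation), so Krull's height theorem gives `n + 1 ≤ s ≤ s·d^r`, a contradiction.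

Otherwise we follow Lang. Substituting copies of `f` in disjoint blocks of variables into an
anisotropic form of degree `D` in `v` variables yields an anisotropic form of degree `d·D` in
`(n + 1)⌊v / s⌋` variables. Start from a form in many variables (obtained in the same way from
the homogenisation of a polynomial without roots). After `t` substitutions there are about
`((n + 1) / s)^t` variables, whereas the `C_r` property allows at most `(d^t·D)^r = (d^r)^t·D^r`
of them; as `(n + 1) / s > d^r` this fails for large `t`.
-/

open MvPolynomial

/-- A field `k` is a `C_r` field (for a real number `r ≥ 0`) if every homogeneous polynomial
of degree `d > 0` in more than `d^r` variables over `k` has a nontrivial zero in `k`. -/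
def IsCrField (k : Type) [Field k] (r : ℝ) : Prop :=
  ∀ (N d : ℕ), 0 < d → ((d : ℝ) ^ r < (N : ℝ)) →
    ∀ f : MvPolynomial (Fin N) k, f.IsHomogeneous d →
      ∃ x : Fin N → k, x ≠ 0 ∧ eval x f = 0

theorem MvPolynomial.eval_aeval {R σ τ : Type*} [CommSemiring R] (x : σ → R)
    (g : τ → MvPolynomial σ R) (Φ : MvPolynomial τ R) :
    eval x (aeval g Φ) = eval (fun t => eval x (g t)) Φ := by
  rw [aeval_eq_bind₁]
  exact eval₂Hom_bind₁ _ _ _ _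

theorem MvPolynomial.IsHomogeneous.eval_zero {R σ : Type*} [CommSemiring R]
    {φ : MvPolynomial σ R} {d : ℕ} (hφ : φ.IsHomogeneous d) (hd : d ≠ 0) : eval 0 φ = 0 := by
  rw [MvPolynomial.eval_zero, constantCoeff_eq]
  exact hφ.coeff_eq_zero (by simpa using hd.symm)

theorem Polynomial.eval_homogenize_of_eq_zero {K : Type*} [Field K] (p : Polynomial K) (n : ℕ)
    {x : Fin 2 → K} (hx : x 1 = 0) :
    MvPolynomial.eval x (p.homogenize n) = p.coeff n * x 0 ^ n := by
  simp only [homogenize, Finset.Nat.sum_antidiagonal_eq_sum_range_succ_mk, map_sum,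
    MvPolynomial.eval_monomial, Finsupp.prod_pow, Finsupp.coe_update, Fin.prod_univ_two,
    hx, Function.update_self]
  rw [Finset.sum_range_succ, Finset.sum_eq_zero fun i hi => by
    rw [zero_pow (Nat.sub_ne_zero_of_lt (Finset.mem_range.mp hi)), mul_zero, mul_zero]]
  simp

section AnisotropicForms

variable {k : Type*} [Field k] {σ τ ι κ : Type*}

def HasOnlyTrivialCommonZero (f : ι → MvPolynomial σ k) : Prop :=
  ∀ x : σ → k, (∀ i, eval x (f i) = 0) → x = 0

variable (k) in
def HasAnisotropicForm (D : ℕ) (σ : Type*) : Prop :=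
  ∃ Φ : MvPolynomial σ k, Φ.IsHomogeneous D ∧ ∀ x : σ → k, eval x Φ = 0 → x = 0

theorem HasAnisotropicForm.aeval {D d : ℕ} (h : HasAnisotropicForm k D τ)
    {g : τ → MvPolynomial σ k} (hg : ∀ t, (g t).IsHomogeneous d)
    (hg0 : HasOnlyTrivialCommonZero g) : HasAnisotropicForm k (d * D) σ := by
  obtain ⟨Φ, hΦ, hΦ0⟩ := h
  refine ⟨MvPolynomial.aeval g Φ, hΦ.aeval g hg, fun x hx =>
    hg0 x fun t => congrFun (hΦ0 (fun t => eval x (g t)) ?_) t⟩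
  rwa [eval_aeval] at hx

theorem HasAnisotropicForm.of_embedding {D : ℕ} (h : HasAnisotropicForm k D τ) (e : σ ↪ τ) :
    HasAnisotropicForm k D σ := by
  have hX : ∀ t, (Function.extend e X 0 t : MvPolynomial σ k).IsHomogeneous 1 := by
    intro t
    by_cases ht : ∃ a, e a = t
    · obtain ⟨a, rfl⟩ := ht
      rw [e.injective.extend_apply]
      exact isHomogeneous_X k a
    · rw [Function.extend_apply' _ _ _ ht]
      exact isHomogeneous_zero _ _ _
  simpa using h.aeval hX fun x hx => funext fun a => by
    simpa [e.injective.extend_apply] using hx (e a)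

theorem HasAnisotropicForm.prod {D d : ℕ} (h : HasAnisotropicForm k D (ι × κ))
    {f : κ → MvPolynomial σ k} (hf : ∀ j, (f j).IsHomogeneous d)
    (hf0 : HasOnlyTrivialCommonZero f) : HasAnisotropicForm k (d * D) (ι × σ) := by
  refine h.aeval (g := fun p => rename (Prod.mk p.1) (f p.2))
    (fun p => (hf p.2).rename_isHomogeneous) fun x hx => ?_
  have hblock : ∀ i, x ∘ Prod.mk i = 0 := fun i =>
    hf0 _ fun j => by simpa [eval_rename] using hx (i, j)
  funext ⟨i, a⟩
  exact congrFun (hblock i) a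

theorem HasAnisotropicForm.fin_div_mul {D d v s N : ℕ} (h : HasAnisotropicForm k D (Fin v))
    {f : Fin s → MvPolynomial (Fin N) k} (hf : ∀ i, (f i).IsHomogeneous d)
    (hf0 : HasOnlyTrivialCommonZero f) : HasAnisotropicForm k (d * D) (Fin (v / s * N)) :=
  ((h.of_embedding (finProdFinEquiv.toEmbedding.trans
    (Fin.castLEEmb (Nat.div_mul_le_self v s)))).prod hf hf0).of_embedding
    finProdFinEquiv.symm.toEmbedding

theorem HasAnisotropicForm.iterate {D d v s N : ℕ} (h : HasAnisotropicForm k D (Fin v))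
    {f : Fin s → MvPolynomial (Fin N) k} (hf : ∀ i, (f i).IsHomogeneous d)
    (hf0 : HasOnlyTrivialCommonZero f) (t : ℕ) :
    HasAnisotropicForm k (d ^ t * D) (Fin ((fun w => w / s * N)^[t] v)) := by
  induction t with
  | zero => simpa using h
  | succ t ih =>
    rw [Function.iterate_succ_apply', pow_succ', mul_assoc]
    exact ih.fin_div_mul hf hf0

theorem exists_hasAnisotropicForm_fin_two (hk : ¬ IsAlgClosed k) :
    ∃ e, 0 < e ∧ HasAnisotropicForm k e (Fin 2) := by
  obtain ⟨p, hmonic, hirr, hroot⟩ :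
      ∃ p : Polynomial k, p.Monic ∧ Irreducible p ∧ ∀ x, p.eval x ≠ 0 := by
    by_contra! h
    exact hk (IsAlgClosed.of_exists_root k h)
  refine ⟨p.natDegree, hirr.natDegree_pos, p.homogenize p.natDegree,
    p.isHomogeneous_homogenize, fun x hx => ?_⟩
  by_cases hx1 : x 1 = 0
  · rw [p.eval_homogenize_of_eq_zero _ hx1, hmonic.coeff_natDegree, one_mul] at hx
    have hx0 := pow_eq_zero_iff hirr.natDegree_pos.ne' |>.mp hx
    funext i
    fin_cases i <;> assumption
  · rw [Polynomial.eval_homogenize le_rfl x hx1] at hx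
    exact absurd hx (mul_ne_zero (hroot _) (pow_ne_zero _ hx1))

theorem exists_hasAnisotropicForm_lt_of_not_isAlgClosed (hk : ¬ IsAlgClosed k) (T : ℕ) :
    ∃ D v, 0 < D ∧ T < v ∧ HasAnisotropicForm k D (Fin v) := by
  obtain ⟨e, he, Φ, hΦ, hΦ0⟩ := exists_hasAnisotropicForm_fin_two hk
  have hX : HasAnisotropicForm k 1 (Fin 1) :=
    ⟨X 0, isHomogeneous_X k 0, fun x hx => funext fun i => by
      simpa [Fin.fin_one_eq_zero i] using hx⟩
  have hiter := hX.iterate (f := fun _ : Fin 1 => Φ) (fun _ => hΦ) (fun x hx => hΦ0 x (hx 0)) T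
  have hcount : ∀ t, (fun w => w / 1 * 2)^[t] 1 = 2 ^ t := fun t => by
    induction t with
    | zero => rfl
    | succ t ih => rw [Function.iterate_succ_apply', ih, Nat.div_one, pow_succ]
  rw [hcount] at hiter
  exact ⟨_, _, by positivity, Nat.lt_two_pow_self, hiter⟩

end AnisotropicForms

section AlgClosed

variable {k σ ι : Type*} [Field k]

theorem MvPolynomial.ringKrullDim_eq_natCard [Finite σ] :
    ringKrullDim (MvPolynomial σ k) = Nat.card σ := by
  simp [ringKrullDim_eq_zero_of_field]

theorem MvPolynomial.height_vanishingIdeal_singleton_eq (x y : σ → k) :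
    (vanishingIdeal k {x}).height = (vanishingIdeal k {y}).height := by
  let e : MvPolynomial σ k ≃ₐ[k] MvPolynomial σ k :=
    AlgEquiv.ofAlgHom (aeval fun i => X i + C (x i - y i)) (aeval fun i => X i - C (x i - y i))
      (by ext; simp) (by ext; simp)
  have he : (vanishingIdeal k {y}).comap e.toRingEquiv = vanishingIdeal k {x} := by
    ext p
    simp only [Ideal.mem_comap, mem_vanishingIdeal_singleton_iff]
    show eval y (aeval _ p) = 0 ↔ _
    rw [eval_aeval]
    simp
  rw [← he, RingEquiv.height_comap]

theorem MvPolynomial.natCard_le_height_vanishingIdeal_singleton [IsAlgClosed k] [Finite σ]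
    (x : σ → k) : Nat.card σ ≤ (vanishingIdeal k {x}).height := by
  suffices ringKrullDim (MvPolynomial σ k) ≤ (vanishingIdeal k {x}).height by
    rw [ringKrullDim_eq_natCard] at this
    exact_mod_cast this
  rw [ringKrullDim_le_iff_isMaximal_height_le]
  intro M hM
  obtain ⟨y, rfl⟩ := isMaximal_iff_eq_vanishingIdeal_singleton.mp hM
  rw [height_vanishingIdeal_singleton_eq y x]

theorem Ideal.spanRank_span_range_toENat_le {R : Type*} [CommRing R] [Finite ι] (f : ι → R) :
    (Ideal.span (Set.range f)).spanRank.toENat ≤ Nat.card ι := by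
  rw [Cardinal.toENat_le_natCast]
  refine (Submodule.spanRank_span_le_card _).trans ?_
  rw [← Nat.cast_card (α := Set.range f)]
  exact_mod_cast Finite.card_range_le f

theorem MvPolynomial.natCard_le_of_zeroLocus_eq_singleton [IsAlgClosed k] [Finite σ] [Finite ι]
    (f : ι → MvPolynomial σ k) {x : σ → k} (h : zeroLocus k (Ideal.span (Set.range f)) = {x}) :
    Nat.card σ ≤ Nat.card ι := by
  set I := Ideal.span (Set.range f)
  have hrad : I.radical = vanishingIdeal k {x} := by
    rw [← vanishingIdeal_zeroLocus_eq_radical (K := k), h]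
  have hmin : vanishingIdeal k {x} ∈ I.minimalPrimes := by
    have hmax : (vanishingIdeal k {x}).IsMaximal :=
      isMaximal_iff_eq_vanishingIdeal_singleton.mpr ⟨x, rfl⟩
    exact ⟨⟨hmax.isPrime, hrad ▸ I.le_radical⟩,
      fun P ⟨hP, hIP⟩ _ => hrad ▸ hP.radical_le_iff.mpr hIP⟩
  have hKrull := Ideal.height_le_spanRank_toENat_of_mem_minimalPrimes I _ hmin
  exact_mod_cast (natCard_le_height_vanishingIdeal_singleton x).trans
    (hKrull.trans (Ideal.spanRank_span_range_toENat_le f))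

theorem HasOnlyTrivialCommonZero.natCard_le [IsAlgClosed k] [Finite σ] [Finite ι]
    {f : ι → MvPolynomial σ k} (hf0 : HasOnlyTrivialCommonZero f)
    (h0 : ∀ i, eval 0 (f i) = 0) : Nat.card σ ≤ Nat.card ι := by
  refine natCard_le_of_zeroLocus_eq_singleton f (x := 0) ?_
  ext x
  simp only [zeroLocus_span, Set.forall_mem_range, Set.mem_ofPred_eq, Set.mem_singleton_iff]
  exact ⟨hf0 x, by rintro rfl; exact h0⟩

end AlgClosed

theorem pow_mul_sub_le_of_affine_recurrence {u : ℕ → ℝ} {α c : ℝ} (hα : 1 < α)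
    (hu : ∀ t, α * u t - c ≤ u (t + 1)) (t : ℕ) :
    α ^ t * (u 0 - c / (α - 1)) ≤ u t - c / (α - 1) := by
  have hc : c / (α - 1) * (α - 1) = c := div_mul_cancel₀ c (by linarith)
  induction t with
  | zero => simp
  | succ t ih =>
    calc α ^ (t + 1) * (u 0 - c / (α - 1)) = α * (α ^ t * (u 0 - c / (α - 1))) := by ring
      _ ≤ α * (u t - c / (α - 1)) := by gcongr
      _ ≤ u (t + 1) - c / (α - 1) := by linarith [hu t]

theorem exists_pow_mul_lt_pow_mul {a b ε : ℝ} (ha : 0 < a) (hab : a < b) (hε : 0 < ε) (C : ℝ) :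
    ∃ t : ℕ, a ^ t * C < b ^ t * ε := by
  obtain ⟨t, ht⟩ := pow_unbounded_of_one_lt (C / ε) ((one_lt_div ha).mpr hab)
  refine ⟨t, ?_⟩
  rw [div_pow, div_lt_div_iff₀ hε (by positivity)] at ht
  linarith

theorem Nat.cast_div_mul_ge (v s N : ℕ) (hs : 0 < s) :
    (N / s : ℝ) * v - N ≤ ((v / s * N : ℕ) : ℝ) := by
  have hv : (v : ℝ) < (v / s : ℕ) * s + s := by exact_mod_cast Nat.lt_div_mul_add hs
  have hs' : (0 : ℝ) < s := by exact_mod_cast hs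
  rw [Nat.cast_mul, div_mul_eq_mul_div, div_sub' hs'.ne', div_le_iff₀ hs']
  nlinarith [(Nat.cast_nonneg N : (0 : ℝ) ≤ N)]

theorem IsCrField.natCast_le_rpow {k : Type} [Field k] {r : ℝ} (hk : IsCrField k r) {D v : ℕ}
    (hD : 0 < D) (h : HasAnisotropicForm k D (Fin v)) : (v : ℝ) ≤ (D : ℝ) ^ r := by
  obtain ⟨Φ, hΦ, hΦ0⟩ := h
  by_contra! hlt
  obtain ⟨x, hx, hx0⟩ := hk v D hD hlt Φ hΦ
  exact hx (hΦ0 x hx0)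

theorem IsCrField.not_hasOnlyTrivialCommonZero {k : Type} [Field k] {r : ℝ} (hr : 0 ≤ r)
    (hk : IsCrField k r) (hac : ¬ IsAlgClosed k) {s N d : ℕ} (hs : 0 < s) (hd : 0 < d)
    {f : Fin s → MvPolynomial (Fin N) k} (hf : ∀ i, (f i).IsHomogeneous d)
    (hnum : (s : ℝ) * (d : ℝ) ^ r < N) : ¬ HasOnlyTrivialCommonZero f := by
  intro hf0
  set a : ℝ := (d : ℝ) ^ r
  set α : ℝ := N / s
  have hs' : (0 : ℝ) < s := by exact_mod_cast hs
  have ha : 1 ≤ a := Real.one_le_rpow (by exact_mod_cast hd) hr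
  have hαa : a < α := by rw [lt_div_iff₀ hs']; linarith
  -- the fixed point of `w ↦ α * w - N`, which bounds one substitution step from below
  set β : ℝ := N / (α - 1)
  have hβ : 0 ≤ β := div_nonneg (Nat.cast_nonneg N) (by linarith)
  obtain ⟨D, v, hD, hv, hΦ⟩ := exists_hasAnisotropicForm_lt_of_not_isAlgClosed hac ⌈β⌉₊
  set u : ℕ → ℕ := fun t => (fun w => w / s * N)^[t] v
  have hlower := pow_mul_sub_le_of_affine_recurrence (u := fun t => (u t : ℝ)) (α := α)
    (c := N) (by linarith) fun t => by
      simpa only [u, Function.iterate_succ_apply'] using Nat.cast_div_mul_ge (u t) s N hs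
  have hupper : ∀ t, (u t : ℝ) ≤ a ^ t * (D : ℝ) ^ r := fun t => by
    have := hk.natCast_le_rpow (by positivity) (hΦ.iterate hf hf0 t)
    rwa [Nat.cast_mul, Nat.cast_pow, Real.mul_rpow (by positivity) (by positivity),
      ← Real.rpow_pow_comm (Nat.cast_nonneg d)] at this
  have hvβ : 0 < (v : ℝ) - β := by linarith [Nat.lt_of_ceil_lt hv]
  obtain ⟨t, ht⟩ := exists_pow_mul_lt_pow_mul (by positivity) hαa hvβ ((D : ℝ) ^ r)
  have hlower_t := hlower t
  simp only [u, Function.iterate_zero_apply] at hlower_t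
  linarith [hupper t]

/-- Lang's theorem, homogeneous systems:
Let `k` be a `C_r` field and let `f_1, ..., f_s ∈ k[x_0, ..., x_n]` be homogeneous polynomials,
all of the same degree `d > 0`.  If `n + 1 > s·d^r`, then `f_1, ..., f_s` have a common
nontrivial zero in `k^{n+1}`. -/
theorem cr_field_system_common_nontrivial_zero (k : Type) [Field k] (r : ℝ) (hr : 0 ≤ r)
    (hk : IsCrField k r) (n s d : ℕ) (hd : 0 < d)
    (f : Fin s → MvPolynomial (Fin (n + 1)) k)
    (hf : ∀ i, (f i).IsHomogeneous d)
    (hnum : (s : ℝ) * (d : ℝ) ^ r < (n : ℝ) + 1) :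
    ∃ x : Fin (n + 1) → k, x ≠ 0 ∧ ∀ i, eval x (f i) = 0 := by
  by_contra! hno
  have hf0 : HasOnlyTrivialCommonZero f := fun x hx => by
    by_contra hx0
    obtain ⟨i, hi⟩ := hno x hx0
    exact hi (hx i)
  by_cases hac : IsAlgClosed k
  · have hcard := hf0.natCard_le fun i => (hf i).eval_zero hd.ne'
    rw [Nat.card_fin, Nat.card_fin] at hcard
    have hdr : 1 ≤ (d : ℝ) ^ r := Real.one_le_rpow (by exact_mod_cast hd) hr
    have hsn : (n : ℝ) + 1 ≤ s := by exact_mod_cast hcard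
    nlinarith
  · rcases s.eq_zero_or_pos with rfl | hs
    · exact one_ne_zero (hf0 1 fun i => i.elim0)
    · exact hk.not_hasOnlyTrivialCommonZero hr hac hs hd hf (by push_cast; linarith) hf0
end

section
/- Let Q ⊂ P^N be a smooth quadric hypersurface of dimension N−1 over a C_r field k, and let 0 ≤ s ≤ ⌊(N−1)/2⌋. If N − 2s + 1 > 2^r, then through any k-rational point of Q there is a linear subspace of dimension s defined over k and contained in Q. -/
open MvPolynomial

/-! The polynomial `f` is a quadratic form `Q` on `k^{N+1}`. If `W` is a totally isotropic
subspace of dimension `t + 1`, its orthogonal `W^⊥` for the polar form has codimension at most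
`t + 1`, so `W^⊥` meets a complement of `W` in a subspace of dimension at least `N - 2t - 1`.
When this exceeds `2^r`, the `C_r` property, applied to `f` restricted to that subspace, gives a
nonzero isotropic `u ∉ W` orthogonal to `W`, and `W + k u` is again totally isotropic.
Starting from `k x` and enlarging `s` times gives the required subspace. -/

open Module

theorem Finsupp.exists_eq_single_add_single_of_degree_eq_two {ι : Type*} {d : ι →₀ ℕ}
    (hd : d.degree = 2) : ∃ i j, d = Finsupp.single i 1 + Finsupp.single j 1 := by
  classical
  have hcard : Multiset.card (Finsupp.toMultiset d) = 2 := by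
    rwa [Finsupp.card_toMultiset]
  obtain ⟨i, j, hij⟩ := Multiset.card_eq_two.mp hcard
  refine ⟨i, j, ?_⟩
  rw [← Finsupp.toMultiset_toFinsupp d, hij]
  ext a
  simp only [Multiset.toFinsupp_apply, Multiset.insert_eq_cons, Multiset.count_cons,
    Multiset.count_singleton, Finsupp.add_apply, Finsupp.single_apply]
  grind

theorem MvPolynomial.IsHomogeneous.exists_quadraticMap_eq_eval {R σ : Type*} [CommRing R]
    {f : MvPolynomial σ R} (hf : f.IsHomogeneous 2) :
    ∃ Q : QuadraticMap R (σ → R) R, ∀ x, Q x = eval x f := by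
  rw [f.as_sum]
  refine Finset.sum_induction _ (fun p => ∃ Q : QuadraticMap R (σ → R) R, ∀ x, Q x = eval x p)
    (fun p q ⟨Qp, hp⟩ ⟨Qq, hq⟩ => ⟨Qp + Qq, by simp [hp, hq]⟩) ⟨0, by simp⟩ ?_
  intro d hd
  have hdeg : d.degree = 2 := by
    by_contra h
    exact mem_support_iff.mp hd (hf.coeff_eq_zero h)
  obtain ⟨i, j, rfl⟩ := Finsupp.exists_eq_single_add_single_of_degree_eq_two hdeg
  refine ⟨coeff (Finsupp.single i 1 + Finsupp.single j 1) f •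
    QuadraticMap.linMulLin (LinearMap.proj i) (LinearMap.proj j), fun x => ?_⟩
  simp [monomial_add_single, ← C_mul_X_eq_monomial, mul_assoc]

theorem MvPolynomial.IsHomogeneous.exists_comp_linearMap {R ι : Type*} [CommRing R] {m d : ℕ}
    {f : MvPolynomial ι R} (hf : f.IsHomogeneous d) (L : (Fin m → R) →ₗ[R] ι → R) :
    ∃ g : MvPolynomial (Fin m) R, g.IsHomogeneous d ∧ ∀ y, eval y g = eval (L y) f := by
  set σ : ι → MvPolynomial (Fin m) R := fun i => ∑ j, C (L (Pi.single j 1) i) * X j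
  have hσ : ∀ i, (σ i).IsHomogeneous 1 := fun i =>
    IsHomogeneous.sum _ _ _ fun j _ => isHomogeneous_C_mul_X _ _
  refine ⟨MvPolynomial.aeval σ f, by simpa using hf.aeval σ hσ, fun y => ?_⟩
  rw [show eval y (MvPolynomial.aeval σ f) = eval (fun i => eval y (σ i)) f from
    eval₂Hom_bind₁ _ _ _ _]
  congr
  funext i
  conv_rhs => rw [L.pi_apply_eq_sum_univ y]
  simp only [σ, map_sum, map_mul, eval_C, eval_X, Finset.sum_apply, Pi.smul_apply, smul_eq_mul]
  refine Finset.sum_congr rfl fun j _ => ?_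
  have hsingle : (Pi.single j 1 : Fin m → R) = fun l => if j = l then 1 else 0 := by
    ext l
    simp [Pi.single_apply, eq_comm]
  rw [mul_comm, hsingle]

theorem IsCrField.exists_mem_ne_zero_eval_eq_zero {k : Type} [Field k] {r : ℝ}
    (hk : IsCrField k r) {n d : ℕ} (hd : 0 < d) {f : MvPolynomial (Fin n) k}
    (hf : f.IsHomogeneous d) (U : Submodule k (Fin n → k)) (hU : (d : ℝ) ^ r < finrank k U) :
    ∃ u ∈ U, u ≠ 0 ∧ eval u f = 0 := by
  let L := U.subtype ∘ₗ (finBasis k U).equivFun.symm.toLinearMap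
  obtain ⟨g, hg, hgL⟩ := hf.exists_comp_linearMap L
  obtain ⟨y, hy0, hy⟩ := hk _ d hd hU g hg
  have hL : Function.Injective L := U.injective_subtype.comp (LinearEquiv.injective _)
  exact ⟨L y, Submodule.coe_mem _, (map_ne_zero_iff L hL).mpr hy0, hgL y ▸ hy⟩

open LinearMap (BilinForm)

namespace QuadraticMap

variable {k V : Type*} [Field k] [AddCommGroup V] [Module k V] {Q : QuadraticForm k V}
  {W : Submodule k V}

theorem polarBilin_isRefl (Q : QuadraticForm k V) : Q.polarBilin.IsRefl := fun x y h => by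
  rwa [polarBilin_apply_apply, polar_comm, ← polarBilin_apply_apply]

theorem map_eq_zero_of_mem_sup_span_singleton (hW : ∀ w ∈ W, Q w = 0) {u : V}
    (hu : u ∈ BilinForm.orthogonal Q.polarBilin W) (hQu : Q u = 0) :
    ∀ y ∈ W ⊔ Submodule.span k {u}, Q y = 0 := by
  intro y hy
  obtain ⟨w, hw, _, hau, rfl⟩ := Submodule.mem_sup.mp hy
  obtain ⟨a, rfl⟩ := Submodule.mem_span_singleton.mp hau
  have hpolar : polar Q w u = 0 := hu w hw
  rw [QuadraticMap.map_add (⇑Q) w (a • u), polar_smul_right, hpolar, QuadraticMap.map_smul,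
    hW w hw, hQu]
  simp

variable [FiniteDimensional k V]

theorem exists_mem_orthogonal_notMem {c : ℕ}
    (hQ : ∀ U : Submodule k V, c < finrank k U → ∃ u ∈ U, u ≠ 0 ∧ Q u = 0)
    (hdim : c + 2 * finrank k W < finrank k V) :
    ∃ u ∈ BilinForm.orthogonal Q.polarBilin W, u ∉ W ∧ Q u = 0 := by
  obtain ⟨C, hC⟩ := W.exists_isCompl
  have hWC := Submodule.finrank_add_eq_of_isCompl hC
  have hWW := BilinForm.finrank_add_finrank_orthogonal Q.polarBilin_isRefl W
  have hsup := Submodule.finrank_sup_add_finrank_inf_eq C (BilinForm.orthogonal Q.polarBilin W)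
  have hle := Submodule.finrank_le (C ⊔ BilinForm.orthogonal Q.polarBilin W)
  obtain ⟨u, ⟨huC, huW⟩, hu0, hQu⟩ := hQ (C ⊓ BilinForm.orthogonal Q.polarBilin W) (by omega)
  exact ⟨u, huW, fun h => hu0 (Submodule.disjoint_def.mp hC.disjoint u h huC), hQu⟩

theorem exists_isotropic_le_finrank_add_one (hW : ∀ w ∈ W, Q w = 0) {c : ℕ}
    (hQ : ∀ U : Submodule k V, c < finrank k U → ∃ u ∈ U, u ≠ 0 ∧ Q u = 0)
    (hdim : c + 2 * finrank k W < finrank k V) :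
    ∃ W', W ≤ W' ∧ finrank k W' = finrank k W + 1 ∧ ∀ y ∈ W', Q y = 0 := by
  obtain ⟨u, huW, hu, hQu⟩ := exists_mem_orthogonal_notMem hQ hdim
  exact ⟨W ⊔ Submodule.span k {u}, le_sup_left, Submodule.finrank_sup_span_singleton hu,
    map_eq_zero_of_mem_sup_span_singleton hW huW hQu⟩

theorem exists_isotropic_finrank_eq_mem {c : ℕ}
    (hQ : ∀ U : Submodule k V, c < finrank k U → ∃ u ∈ U, u ≠ 0 ∧ Q u = 0)
    {x : V} (hx0 : x ≠ 0) (hx : Q x = 0) :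
    ∀ s : ℕ, c + 2 * s < finrank k V →
      ∃ W : Submodule k V, finrank k W = s + 1 ∧ x ∈ W ∧ ∀ y ∈ W, Q y = 0
  | 0, _ => ⟨Submodule.span k {x}, finrank_span_singleton hx0, Submodule.mem_span_singleton_self x,
      fun y hy => by
        obtain ⟨a, rfl⟩ := Submodule.mem_span_singleton.mp hy
        simp [QuadraticMap.map_smul, hx]⟩
  | s + 1, hs => by
    obtain ⟨W, hWdim, hxW, hW⟩ := exists_isotropic_finrank_eq_mem hQ hx0 hx s (by omega)
    obtain ⟨W', hWW', hW'dim, hW'⟩ := exists_isotropic_le_finrank_add_one hW hQ (by omega)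
    exact ⟨W', by omega, hWW' hxW, hW'⟩

end QuadraticMap

theorem smooth_quadric_linear_subspace_through_point_general (k : Type) [Field k]
    (r : ℝ) (hk : IsCrField k r) (N s : ℕ)
    (f : MvPolynomial (Fin (N + 1)) k) (hf : f.IsHomogeneous 2)
    (hnum : (2 : ℝ) ^ r < (N : ℝ) - 2 * (s : ℝ) + 1)
    (x : Fin (N + 1) → k) (hx0 : x ≠ 0) (hx : eval x f = 0) :
    ∃ W : Submodule k (Fin (N + 1) → k),
      Module.finrank k W = s + 1 ∧ x ∈ W ∧ ∀ y ∈ W, eval y f = 0 := by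
  obtain ⟨Q, hQ⟩ := hf.exists_quadraticMap_eq_eval
  set c := ⌊(2 : ℝ) ^ r⌋₊
  have hQiso (U : Submodule k (Fin (N + 1) → k)) (hU : c < finrank k U) :
      ∃ u ∈ U, u ≠ 0 ∧ Q u = 0 := by
    have hU' : ((2 : ℕ) : ℝ) ^ r < finrank k U := by
      exact_mod_cast (Nat.floor_lt (by positivity)).mp hU
    simpa only [hQ] using hk.exists_mem_ne_zero_eval_eq_zero two_pos hf U hU'
  have hdim : c + 2 * s < finrank k (Fin (N + 1) → k) := by
    have hc : (c : ℝ) ≤ 2 ^ r := Nat.floor_le (by positivity)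
    rw [Module.finrank_fin_fun]
    exact_mod_cast (by linarith : (c : ℝ) + 2 * s < N + 1)
  simpa only [hQ] using Q.exists_isotropic_finrank_eq_mem hQiso hx0 ((hQ x).trans hx) s hdim

/-- Let `Q = {f = 0} ⊂ ℙ^N` be a smooth quadric hypersurface of dimension `N − 1` over a `C_r`
field `k` and let `0 ≤ s ≤ ⌊(N−1)/2⌋`.  If `N − 2s + 1 > 2^r`, then through any `k`-rational
point of `Q` there is a linear subspace of dimension `s` defined over `k` and contained
in `Q`.  (Projective `s`-planes through `[x]` contained in `Q` correspond to
`(s+1)`-dimensional linear subspaces `W ∋ x` of `k^{N+1}` on which `f` vanishes;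
smoothness is expressed by the nonvanishing of the gradient of `f` at the nonzero points of
the affine cone over the algebraic closure of `k`.) -/
theorem smooth_quadric_linear_subspace_through_point (k : Type) [Field k]
    (r : ℝ) (hr : 0 ≤ r) (hk : IsCrField k r) (N s : ℕ)
    (hs : 2 * s + 1 ≤ N)
    (f : MvPolynomial (Fin (N + 1)) k) (hf : f.IsHomogeneous 2)
    (hsmooth : ∀ x : Fin (N + 1) → AlgebraicClosure k, x ≠ 0 →
      ∃ i, eval x (MvPolynomial.map (algebraMap k (AlgebraicClosure k)) (pderiv i f)) ≠ 0)
    (hnum : (2 : ℝ) ^ r < (N : ℝ) - 2 * (s : ℝ) + 1)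
    (x : Fin (N + 1) → k) (hx0 : x ≠ 0) (hx : eval x f = 0) :
    ∃ W : Submodule k (Fin (N + 1) → k),
      Module.finrank k W = s + 1 ∧ x ∈ W ∧ ∀ y ∈ W, eval y f = 0 :=
  smooth_quadric_linear_subspace_through_point_general k r hk N s f hf hnum x hx0 hx
end

section
/- Let X_d ⊂ P^{n+1} be a hypersurface of degree d over a field k having multiplicity m along an h-plane Λ, and let X̃_d be the blow-up of X_d along Λ with exceptional divisor Ẽ. Then X̃_d is isomorphic to a divisor in the projective bundle P(O_{P^{n−h}}(1) ⊕ O_{P^{n−h}}^{⊕(h+1)}) over P^{n−h}, and the exceptional divisor Ẽ is a divisor of bidegree (m, d−m) in P^{n−h} × P^h. -/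
/-!
Substituting `z_i = x_i y₀` multiplies each monomial `z^σ` of `f` by `y₀^a`, where `a ≥ m` is its
degree in the `z_i`; dividing by `y₀^m` monomial by monomial gives `f̃`. Each monomial of `f̃` then
scales by `s^d t^(d-m)` under the torus, because `f` is homogeneous of degree `d`. Setting `y₀ = 0`
kills exactly the monomials with `a > m`, and the survivors have degree `m` in the `x`-variables
and `d - m` in the `y`-variables.
-/

open MvPolynomial Finset

section StrictTransform

variable {k : Type*} [CommRing k] {ι κ : Type*} [Fintype ι] [Fintype κ]

theorem MvPolynomial.IsHomogeneous.sum_inl_add_sum_inr_eq {f : MvPolynomial (ι ⊕ κ) k} {d : ℕ}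
    (hf : f.IsHomogeneous d) {σ : (ι ⊕ κ) →₀ ℕ} (hσ : σ ∈ f.support) :
    (∑ i, σ (Sum.inl i)) + (∑ j, σ (Sum.inr j)) = d := by
  rw [← Fintype.sum_sum_type, ← Finsupp.degree_eq_sum, Finsupp.degree_eq_weight_one]
  exact hf (mem_support_iff.mp hσ)

theorem eval_monomial_sumElim (a : ι → k) (b : κ → k) (σ : (ι ⊕ κ) →₀ ℕ) (c : k) :
    eval (Sum.elim a b) (monomial σ c)
      = c * ((∏ i, a i ^ σ (Sum.inl i)) * ∏ j, b j ^ σ (Sum.inr j)) := by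
  rw [eval_monomial, Finsupp.prod_fintype _ _ fun _ => pow_zero _, Fintype.prod_sum_type]
  rfl

/-- When `m ≤ ∑ i, σ (Sum.inl i)`, substituting `z_i = x_i y₀` turns `z^σ` into `y₀^m` times the
monomial with this exponent. -/
noncomputable def blowupExponent (m : ℕ) (σ : (ι ⊕ κ) →₀ ℕ) : (ι ⊕ (Unit ⊕ κ)) →₀ ℕ :=
  Finsupp.equivFunOnFinite.symm <| Sum.elim (fun i => σ (Sum.inl i))
    (Sum.elim (fun _ => (∑ i, σ (Sum.inl i)) - m) fun j => σ (Sum.inr j))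

noncomputable def strictTransform (m : ℕ) (f : MvPolynomial (ι ⊕ κ) k) :
    MvPolynomial (ι ⊕ (Unit ⊕ κ)) k :=
  ∑ σ ∈ f.support, monomial (blowupExponent m σ) (coeff σ f)

theorem eval_monomial_blowupExponent (m : ℕ) (x : ι → k) (y₀ : k) (y : κ → k)
    (σ : (ι ⊕ κ) →₀ ℕ) (c : k) :
    eval (Sum.elim x (Sum.elim (fun _ => y₀) y)) (monomial (blowupExponent m σ) c)
      = c * ((∏ i, x i ^ σ (Sum.inl i)) *
          (y₀ ^ ((∑ i, σ (Sum.inl i)) - m) * ∏ j, y j ^ σ (Sum.inr j))) := by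
  rw [eval_monomial_sumElim, Fintype.prod_sum_type]
  simp [blowupExponent]

theorem aeval_monomial_blowupExponent_restrict (m : ℕ) (σ : (ι ⊕ κ) →₀ ℕ) (c : k) :
    aeval (Sum.elim (fun i => (X (Sum.inl i) : MvPolynomial (ι ⊕ κ) k))
        (Sum.elim (fun _ => 0) fun j => X (Sum.inr j))) (monomial (blowupExponent m σ) c)
      = if ∑ i, σ (Sum.inl i) ≤ m then monomial σ c else 0 := by
  rw [aeval_monomial, Finsupp.prod_fintype _ _ fun _ => pow_zero _, Fintype.prod_sum_type,
    Fintype.prod_sum_type, monomial_eq, Finsupp.prod_fintype _ _ fun _ => pow_zero _,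
    Fintype.prod_sum_type]
  split_ifs with h
  · simp [blowupExponent, Nat.sub_eq_zero_of_le h]
  · simp [blowupExponent, zero_pow (Nat.sub_ne_zero_of_lt (not_le.mp h))]

theorem eval_blowdown_eq_pow_mul_eval_strictTransform {m : ℕ} {f : MvPolynomial (ι ⊕ κ) k}
    (hmult : ∀ σ ∈ f.support, m ≤ ∑ i, σ (Sum.inl i)) (x : ι → k) (y₀ : k) (y : κ → k) :
    eval (Sum.elim (fun i => x i * y₀) y) f
      = y₀ ^ m * eval (Sum.elim x (Sum.elim (fun _ => y₀) y)) (strictTransform m f) := by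
  conv_lhs => rw [← f.support_sum_monomial_coeff]
  simp only [strictTransform, map_sum, mul_sum, eval_monomial_blowupExponent]
  refine sum_congr rfl fun σ hσ => ?_
  obtain ⟨r, hr⟩ := Nat.exists_eq_add_of_le (hmult σ hσ)
  simp only [eval_monomial_sumElim, mul_pow, prod_mul_distrib, prod_pow_eq_pow_sum]
  rw [hr, Nat.add_sub_cancel_left, pow_add]
  ring

theorem eval_torusAction_strictTransform {m d : ℕ} {f : MvPolynomial (ι ⊕ κ) k}
    (hf : f.IsHomogeneous d) (hmult : ∀ σ ∈ f.support, m ≤ ∑ i, σ (Sum.inl i))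
    (s t : k) (x : ι → k) (y₀ : k) (y : κ → k) :
    eval (Sum.elim (fun i => s * x i) (Sum.elim (fun _ => t * y₀) fun j => s * t * y j))
        (strictTransform m f)
      = s ^ d * t ^ (d - m) *
          eval (Sum.elim x (Sum.elim (fun _ => y₀) y)) (strictTransform m f) := by
  simp only [strictTransform, map_sum, mul_sum, eval_monomial_blowupExponent]
  refine sum_congr rfl fun σ hσ => ?_
  obtain ⟨r, hr⟩ := Nat.exists_eq_add_of_le (hmult σ hσ)
  simp only [mul_pow, prod_mul_distrib, prod_pow_eq_pow_sum]
  have hd := hf.sum_inl_add_sum_inr_eq hσ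
  rw [show d - m = r + ∑ j, σ (Sum.inr j) by omega, ← hd, hr, Nat.add_sub_cancel_left]
  simp only [pow_add]
  ring

theorem support_aeval_restrict_strictTransform_subset (m : ℕ) (f : MvPolynomial (ι ⊕ κ) k) :
    (aeval (Sum.elim (fun i => (X (Sum.inl i) : MvPolynomial (ι ⊕ κ) k))
        (Sum.elim (fun _ => 0) fun j => X (Sum.inr j))) (strictTransform m f)).support
      ⊆ {σ ∈ f.support | ∑ i, σ (Sum.inl i) ≤ m} := by
  classical
  simp only [strictTransform, map_sum, aeval_monomial_blowupExponent_restrict]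
  rw [← sum_filter]
  exact support_sum.trans <| biUnion_subset.mpr fun σ hσ =>
    support_monomial_subset.trans (singleton_subset_iff.mpr hσ)

end StrictTransform

theorem blowup_along_plane_strict_transform_general (k : Type) [Field k]
    (n h d m : ℕ)
    (f : MvPolynomial (Fin (n - h + 1) ⊕ Fin (h + 1)) k)
    (hf : f.IsHomogeneous d)
    (hmult : ∀ σ ∈ f.support, m ≤ ∑ i, σ (Sum.inl i)) :
    ∃ ft : MvPolynomial (Fin (n - h + 1) ⊕ (Unit ⊕ Fin (h + 1))) k,
      (∀ (x : Fin (n - h + 1) → k) (y0 : k) (y : Fin (h + 1) → k),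
        eval (Sum.elim (fun i => x i * y0) y) f
          = y0 ^ m * eval (Sum.elim x (Sum.elim (fun _ => y0) y)) ft) ∧
      (∀ (s t : k) (x : Fin (n - h + 1) → k) (y0 : k) (y : Fin (h + 1) → k),
        eval (Sum.elim (fun i => s * x i)
            (Sum.elim (fun _ => t * y0) (fun j => s * t * y j))) ft
          = s ^ d * t ^ (d - m) * eval (Sum.elim x (Sum.elim (fun _ => y0) y)) ft) ∧
      (∀ σ ∈ (aeval (Sum.elim
            (fun i => (X (Sum.inl i) : MvPolynomial (Fin (n - h + 1) ⊕ Fin (h + 1)) k))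
            (Sum.elim (fun _ => 0) (fun j => X (Sum.inr j)))) ft).support,
        (∑ i, σ (Sum.inl i)) = m ∧ (∑ j, σ (Sum.inr j)) = d - m) := by
  refine ⟨strictTransform m f, eval_blowdown_eq_pow_mul_eval_strictTransform hmult,
    eval_torusAction_strictTransform hf hmult, fun σ hσ => ?_⟩
  obtain ⟨hσf, hle⟩ := mem_filter.mp (support_aeval_restrict_strictTransform_subset m f hσ)
  have hd := hf.sum_inl_add_sum_inr_eq hσf
  have hm := hmult σ hσf
  omega

/-- the blow-up lemma:
Let `X_d = {f = 0} ⊂ ℙ^{n+1}` be a hypersurface of degree `d` having multiplicity `m` along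
the `h`-plane `Λ = {z_0 = ... = z_{n−h} = 0}` (every monomial of `f` has degree at least `m`
in the first `n−h+1` variables).  The blow-up of `ℙ^{n+1}` along `Λ` is the toric variety
`P(O_{ℙ^{n−h}}(1) ⊕ O_{ℙ^{n−h}}^{⊕(h+1)})` with Cox coordinates `x_0, ..., x_{n−h}` (of
degree `(1,0)`), `y_0` (of degree `(−1,1)`) and `y_1, ..., y_{h+1}` (of degree `(0,1)`),
blow-down map `(x, y) ↦ [x_0 y_0 : ... : x_{n−h} y_0 : y_1 : ... : y_{h+1}]`.

Then the strict transform `X̃_d` of `X_d` is the divisor `{f̃ = 0}` in this projective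
bundle, where `f̃` satisfies `f(x_0 y_0, ..., x_{n−h} y_0, y_1, ..., y_{h+1}) = y_0^m · f̃`
and is multihomogeneous for the Cox grading (second conjunct; torus weights
`x_i ↦ s x_i`, `y_0 ↦ t y_0`, `y_j ↦ s t y_j` give `f̃ ↦ s^d t^{d−m} f̃`),
and the exceptional divisor `Ẽ = X̃_d ∩ {y_0 = 0}` is a divisor of bidegree `(m, d − m)`
in `ℙ^{n−h} × ℙ^h` (third conjunct:  every monomial of `f̃|_{y_0 = 0}` has degree exactly
`m` in the `x`-variables and `d − m` in the `y`-variables).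

Here the ambient variables of `ℙ^{n+1}` are indexed by `Fin (n−h+1) ⊕ Fin (h+1)`
(`z_0, ..., z_{n−h}` on the left) and those of the blow-up by
`Fin (n−h+1) ⊕ (Unit ⊕ Fin (h+1))` (`y_0` being the `Unit` coordinate). -/
theorem blowup_along_plane_strict_transform (k : Type) [Field k]
    (n h d m : ℕ) (hh : h + 1 ≤ n) (hmd : m ≤ d)
    (f : MvPolynomial (Fin (n - h + 1) ⊕ Fin (h + 1)) k)
    (hf : f.IsHomogeneous d)
    (hmult : ∀ σ ∈ f.support, m ≤ ∑ i, σ (Sum.inl i)) :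
    ∃ ft : MvPolynomial (Fin (n - h + 1) ⊕ (Unit ⊕ Fin (h + 1))) k,
      (∀ (x : Fin (n - h + 1) → k) (y0 : k) (y : Fin (h + 1) → k),
        eval (Sum.elim (fun i => x i * y0) y) f
          = y0 ^ m * eval (Sum.elim x (Sum.elim (fun _ => y0) y)) ft) ∧
      (∀ (s t : k) (x : Fin (n - h + 1) → k) (y0 : k) (y : Fin (h + 1) → k),
        eval (Sum.elim (fun i => s * x i)
            (Sum.elim (fun _ => t * y0) (fun j => s * t * y j))) ft
          = s ^ d * t ^ (d - m) * eval (Sum.elim x (Sum.elim (fun _ => y0) y)) ft) ∧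
      (∀ σ ∈ (aeval (Sum.elim
            (fun i => (X (Sum.inl i) : MvPolynomial (Fin (n - h + 1) ⊕ Fin (h + 1)) k))
            (Sum.elim (fun _ => 0) (fun j => X (Sum.inr j)))) ft).support,
        (∑ i, σ (Sum.inl i)) = m ∧ (∑ j, σ (Sum.inr j)) = d - m) :=
  blowup_along_plane_strict_transform_general k n h d m f hf hmult
end
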